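/- arXiv:math/0005207 — 2 statements merged into one kernel-verified Lean document; each statement's English description precedes it below -/
import Mathlib

section
/- Let r be a positive integer and v an integer with 0 \le v < r. For every integer i \ge 1, the quantity \overline{iv}(r-\overline{iv})/(2r) - i^2 \cdot v(r-v)/(2r) equals -(1/2) \cdot \min_{0 \le j < i} \{(1+j)j r + i(i-1-2j)v\}. -/
theorem stmt1 (r : ℕ) (hr : 0 < r) (v : ℕ) (hv : v < r) (i : ℕ) (hi : 1 ≤ i) :
    (((i * v % r : ℕ) : ℚ) * ((r : ℚ) - ((i * v % r : ℕ) : ℚ))) / (2 * r)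
      - (i : ℚ) ^ 2 * ((v : ℚ) * ((r : ℚ) - v)) / (2 * r)
      = -(1 / 2) *
        ((Finset.range i).inf' (Finset.nonempty_range_iff.mpr (by omega))
          (fun j => ((1 + (j : ℤ)) * j * r + (i : ℤ) * ((i : ℤ) - 1 - 2 * j) * v)) : ℤ) := by
  set q := i * v / r with hq
  have hmod : r * q + i * v % r = i * v := Nat.div_add_mod _ _
  have hlt : i * v % r < r := Nat.mod_lt _ hr
  have hqi : q < i := Nat.div_lt_of_lt_mul (by nlinarith)
  have hz1 : (q : ℤ) * r ≤ (i : ℤ) * v := by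
    have : (r : ℤ) * q + (i * v % r : ℕ) = (i : ℤ) * v := by exact_mod_cast hmod
    have h0 : (0 : ℤ) ≤ ((i * v % r : ℕ) : ℤ) := Int.natCast_nonneg _
    linarith
  have hz2 : (i : ℤ) * v < ((q : ℤ) + 1) * r := by
    have : (r : ℤ) * q + (i * v % r : ℕ) = (i : ℤ) * v := by exact_mod_cast hmod
    have h0 : ((i * v % r : ℕ) : ℤ) < r := by exact_mod_cast hlt
    linarith
  have hinf : ((Finset.range i).inf' (Finset.nonempty_range_iff.mpr (by omega))
      (fun j => ((1 + (j : ℤ)) * j * r + (i : ℤ) * ((i : ℤ) - 1 - 2 * j) * v)))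
      = (1 + (q : ℤ)) * q * r + (i : ℤ) * ((i : ℤ) - 1 - 2 * q) * v := by
    apply le_antisymm
    · exact Finset.inf'_le _ (Finset.mem_range.mpr hqi)
    · apply Finset.le_inf'
      intro j hj
      rcases le_or_gt (j : ℤ) (q : ℤ) with h | h
      · rcases eq_or_lt_of_le h with h' | h'
        · rw [h']
        · have hjq : (j : ℤ) + 1 ≤ q := by omega
          have hr' : (0 : ℤ) ≤ r := by positivity
          nlinarith [mul_nonneg (by omega : (0:ℤ) ≤ (q : ℤ) - j)
            (by nlinarith : (0:ℤ) ≤ 2 * i * v - ((j : ℤ) + q + 1) * r)]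
      · have hjq : (q : ℤ) + 1 ≤ j := by omega
        have hr' : (0 : ℤ) ≤ r := by positivity
        nlinarith [mul_nonneg (by omega : (0:ℤ) ≤ (j : ℤ) - q)
          (by nlinarith : (0:ℤ) ≤ ((j : ℤ) + q + 1) * r - 2 * i * v)]
  rw [hinf]
  have hmodQ : ((i * v % r : ℕ) : ℚ) = (i : ℚ) * v - r * q := by
    have : (r : ℚ) * q + ((i * v % r : ℕ) : ℚ) = (i : ℚ) * v := by exact_mod_cast hmod
    linarith
  rw [hmodQ]
  have hr0 : (r : ℚ) ≠ 0 := by positivity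
  push_cast
  field_simp
  ring
end

section
/- Let l and m be positive integers. The number of lattice points (s,t) with s, t \ge 0 and s + min(l,m)*t < l equals l - (1/2) * \min_{0 \le j < l} \{((1+j)m - 2l)j\}. -/
theorem stmt2 (l m : ℕ) (hl : 0 < l) (hm : 0 < m) :
    (Nat.card {p : ℕ × ℕ // p.1 + min l m * p.2 < l} : ℚ)
      = (l : ℚ) - (1 / 2) *
        ((Finset.range l).inf' (Finset.nonempty_range_iff.mpr (by omega))
          (fun j => ((1 + (j : ℤ)) * m - 2 * l) * j) : ℤ) := by
  set d := min l m with hd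
  have hd1 : 1 ≤ d := le_min hl hm
  have hdm : d ≤ m := min_le_right l m
  set j0 := (l - 1) / m with hj0
  -- basic facts about j0
  have hA : m * j0 ≤ l - 1 := by
    rw [hj0, mul_comm]; exact Nat.div_mul_le_self _ _
  have hB : l ≤ m * (j0 + 1) := by
    by_contra h
    push_neg at h
    have h2 : j0 + 1 ≤ (l - 1) / m := (Nat.le_div_iff_mul_le hm).mpr (by
      rw [mul_comm]; omega)
    omega
  have hA' : m * j0 + 1 ≤ l := by
    calc m * j0 + 1 ≤ (l - 1) + 1 := Nat.add_le_add_right hA 1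
      _ = l := by omega
  have hj0l : j0 < l := by
    have h1 : j0 ≤ m * j0 := Nat.le_mul_of_pos_left j0 hm
    omega
  have hdA : d * j0 ≤ l - 1 := le_trans (Nat.mul_le_mul_right j0 hdm) hA
  have hBd : l ≤ d * (j0 + 1) := by
    rcases le_total m l with h | h
    · rw [hd, min_eq_right h]; exact hB
    · have hdl : d = l := by rw [hd, min_eq_left h]
      have hj00 : j0 = 0 := by rw [hj0]; exact Nat.div_eq_of_lt (by omega)
      rw [hdl, hj00]; omega
  have hC : d * j0 = m * j0 := by
    rcases le_total m l with h | h
    · rw [hd, min_eq_right h]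
    · have hj00 : j0 = 0 := by rw [hj0]; exact Nat.div_eq_of_lt (by omega)
      rw [hj00, mul_zero, mul_zero]
  -- the cardinality as a finset card
  set s : Finset (ℕ × ℕ) :=
    (Finset.range l ×ˢ Finset.range l).filter (fun p => p.1 + d * p.2 < l) with hsdef
  have hset : Nat.card {p : ℕ × ℕ // p.1 + d * p.2 < l} = s.card := by
    have e : {p : ℕ × ℕ // p.1 + d * p.2 < l} ≃ {p : ℕ × ℕ // p ∈ s} :=
      Equiv.subtypeEquivRight (fun p => by
        rw [hsdef]
        simp only [Finset.mem_filter, Finset.mem_product, Finset.mem_range]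
        constructor
        · intro h
          refine ⟨⟨lt_of_le_of_lt (Nat.le_add_right _ _) h, ?_⟩, h⟩
          have h2 : p.2 ≤ d * p.2 := Nat.le_mul_of_pos_left _ hd1
          exact lt_of_le_of_lt (le_trans h2 (Nat.le_add_left _ _)) h
        · exact fun h => h.2)
    rw [Nat.card_congr e, Nat.card_eq_fintype_card, Fintype.card_coe]
  -- evaluate the card as a sum
  have hs1 : s.card = ∑ t ∈ Finset.range l, (l - d * t) := by
    rw [hsdef, Finset.card_filter, Finset.sum_product_right]
    refine Finset.sum_congr rfl fun t _ => ?_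
    have hfil : Finset.filter (fun x => x + d * t < l) (Finset.range l)
        = Finset.range (l - d * t) := by
      ext x
      simp only [Finset.mem_filter, Finset.mem_range]
      generalize d * t = a
      omega
    calc (∑ x ∈ Finset.range l, if x + d * t < l then 1 else 0)
        = (Finset.filter (fun x => x + d * t < l) (Finset.range l)).card :=
          (Finset.card_filter _ _).symm
      _ = l - d * t := by rw [hfil, Finset.card_range]
  have hs2 : s.card = ∑ t ∈ Finset.range (j0 + 1), (l - d * t) := by
    rw [hs1]
    refine (Finset.sum_subset (Finset.range_subset_range.mpr (by omega)) ?_).symm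
    intro t _ ht2
    have ht3 : j0 + 1 ≤ t := by simp only [Finset.mem_range] at ht2; omega
    exact Nat.sub_eq_zero_of_le (le_trans hBd (Nat.mul_le_mul_left d ht3))
  -- cast to ℚ
  have hsq : (s.card : ℚ) = ∑ t ∈ Finset.range (j0 + 1), ((l : ℚ) - (d : ℚ) * t) := by
    rw [hs2, Nat.cast_sum]
    refine Finset.sum_congr rfl fun t ht => ?_
    have htj : t ≤ j0 := Nat.lt_succ_iff.mp (Finset.mem_range.mp ht)
    have hle : d * t ≤ l := le_trans (le_trans (Nat.mul_le_mul_left d htj) hdA) (by omega)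
    rw [Nat.cast_sub hle]
    push_cast
    ring
  have gauss : (∑ t ∈ Finset.range (j0 + 1), (t : ℚ)) = j0 * (j0 + 1) / 2 := by
    have h2 := Finset.sum_range_id_mul_two (j0 + 1)
    have h3 : ((∑ i ∈ Finset.range (j0 + 1), i) * 2 : ℚ) = (j0 + 1) * j0 := by
      exact_mod_cast congrArg (fun n : ℕ => (n : ℚ)) h2
    push_cast at h3
    linarith
  -- the min
  have hAz : (m : ℤ) * (j0 : ℤ) + 1 ≤ (l : ℤ) := by exact_mod_cast hA'
  have hBz : (l : ℤ) ≤ (m : ℤ) * ((j0 : ℤ) + 1) := by exact_mod_cast hB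
  have hmin : (Finset.range l).inf' (Finset.nonempty_range_iff.mpr (by omega))
      (fun j => ((1 + (j : ℤ)) * m - 2 * l) * j)
      = ((1 + (j0 : ℤ)) * m - 2 * l) * j0 := by
    apply le_antisymm
    · exact Finset.inf'_le _ (Finset.mem_range.mpr hj0l)
    · apply Finset.le_inf'
      intro j _
      have hJ : (0 : ℤ) ≤ (j : ℤ) := Int.natCast_nonneg j
      have hJ0 : (0 : ℤ) ≤ (j0 : ℤ) := Int.natCast_nonneg j0
      have hM : (0 : ℤ) ≤ (m : ℤ) := Int.natCast_nonneg m
      have key : ((1 + (j : ℤ)) * m - 2 * l) * j - ((1 + (j0 : ℤ)) * m - 2 * l) * j0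
          = ((j : ℤ) - j0) * ((m : ℤ) * ((j : ℤ) + j0 + 1) - 2 * l) := by ring
      have hpos : 0 ≤ ((j : ℤ) - j0) * ((m : ℤ) * ((j : ℤ) + j0 + 1) - 2 * l) := by
        rcases lt_trichotomy (j : ℤ) (j0 : ℤ) with h | h | h
        · have h5 : (m : ℤ) * ((j : ℤ) + j0 + 1) ≤ (m : ℤ) * (2 * (j0 : ℤ)) :=
            mul_le_mul_of_nonneg_left (by linarith) hM
          have h6 : (m : ℤ) * (2 * (j0 : ℤ)) = 2 * ((m : ℤ) * (j0 : ℤ)) := by ring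
          have f2 : (0 : ℤ) ≤ 2 * l - (m : ℤ) * ((j : ℤ) + j0 + 1) := by linarith
          nlinarith [mul_nonneg (by linarith : (0 : ℤ) ≤ (j0 : ℤ) - j) f2]
        · rw [h]; simp
        · have h5 : (m : ℤ) * (2 * ((j0 : ℤ) + 1)) ≤ (m : ℤ) * ((j : ℤ) + j0 + 1) :=
            mul_le_mul_of_nonneg_left (by linarith) hM
          have h6 : (m : ℤ) * (2 * ((j0 : ℤ) + 1)) = 2 * ((m : ℤ) * ((j0 : ℤ) + 1)) := by ring
          have f2 : (0 : ℤ) ≤ (m : ℤ) * ((j : ℤ) + j0 + 1) - 2 * l := by linarith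
          exact mul_nonneg (by linarith) f2
      linarith
  -- combine
  rw [hset, hsq, hmin, Finset.sum_sub_distrib, Finset.sum_const, Finset.card_range,
    ← Finset.mul_sum, gauss]
  have hCq : (d : ℚ) * (j0 : ℚ) = (m : ℚ) * (j0 : ℚ) := by exact_mod_cast hC
  push_cast
  linear_combination (-(((j0 : ℚ) + 1) / 2)) * hCq
end
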